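/- Under the hypotheses of the Newton–Kantorovich radii polynomial theorem, if p(r_0) = Z_2(r_0)r_0² − (1 − Z_1 − Z_0)r_0 + Y_0 < 0 then necessarily Z_0 + Z_1 < 1, and the map T(x) := x − AF(x) is a contraction on the closed ball B_{r_0}(ā) with contraction constant Z_0 + Z_1 + Z_2(r_0)r_0 < 1. -/

import Mathlib

/-!
The map `T x = x - A (F x)` has derivative `I - A DF(c)`, and writing it as
`(I - A A†) - A (DF(ā) - A†) - A (DF(c) - DF(ā))` bounds its norm on the ball by
`Z₀ + Z₁ + Z₂(r₀) r₀`; the mean value inequality makes that a Lipschitz constant of `T`.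
Dividing `p(r₀) < 0` by `r₀` shows `Z₀ + Z₁ + Z₂(r₀) r₀ < 1 - Y₀ / r₀ ≤ 1`.
-/

section

variable {X X' : Type*} [NormedAddCommGroup X] [NormedSpace ℝ X]
  [NormedAddCommGroup X'] [NormedSpace ℝ X']

theorem norm_id_sub_comp_le (A : X' →L[ℝ] X) (B C D : X →L[ℝ] X') :
    ‖ContinuousLinearMap.id ℝ X - A.comp D‖ ≤
      ‖ContinuousLinearMap.id ℝ X - A.comp B‖ + ‖A.comp (C - B)‖ + ‖A.comp (D - C)‖ := by
  have hsplit : ContinuousLinearMap.id ℝ X - A.comp D =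
      (ContinuousLinearMap.id ℝ X - A.comp B) - A.comp (C - B) - A.comp (D - C) := by
    simp only [ContinuousLinearMap.comp_sub]
    abel
  rw [hsplit]
  exact (norm_sub_le _ _).trans (add_le_add (norm_sub_le _ _) le_rfl)

theorem norm_sub_apply_sub_le_of_norm_id_sub_comp_le {F : X → X'} {DF : X → X →L[ℝ] X'}
    {A : X' →L[ℝ] X} {s : Set X} {κ : ℝ} (hs : Convex ℝ s)
    (hDF : ∀ c ∈ s, HasFDerivAt F (DF c) c)
    (hbound : ∀ c ∈ s, ‖ContinuousLinearMap.id ℝ X - A.comp (DF c)‖ ≤ κ)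
    {x y : X} (hx : x ∈ s) (hy : y ∈ s) :
    ‖(x - A (F x)) - (y - A (F y))‖ ≤ κ * ‖x - y‖ :=
  hs.norm_image_sub_le_of_norm_hasFDerivWithin_le
    (fun c hc => ((hasFDerivAt_id c).sub (A.hasFDerivAt.comp c (hDF c hc))).hasFDerivWithinAt)
    hbound hy hx

end

theorem add_add_mul_lt_one_of_radiiPolynomial_neg {Y₀ Z₀ Z₁ Z₂ r : ℝ} (hr : 0 < r)
    (hY₀ : 0 ≤ Y₀) (hp : Z₂ * r ^ 2 - (1 - Z₁ - Z₀) * r + Y₀ < 0) :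
    Z₀ + Z₁ + Z₂ * r < 1 := by
  have h : (Z₀ + Z₁ + Z₂ * r) * r < 1 * r := by nlinarith
  exact lt_of_mul_lt_mul_right h hr.le

theorem stmt_7_general {X X' : Type*}
    [NormedAddCommGroup X] [NormedSpace ℝ X]
    [NormedAddCommGroup X'] [NormedSpace ℝ X']
    (F : X → X') (DF : X → X →L[ℝ] X')
    (hDF : ∀ c : X, HasFDerivAt F (DF c) c)
    (Adag : X →L[ℝ] X') (A : X' →L[ℝ] X)
    (abar : X) (Y₀ Z₀ Z₁ : ℝ) (Z₂ : ℝ → ℝ)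
    (hY₀ : 0 ≤ Y₀)
    (hZ₂pos : ∀ r : ℝ, 0 < r → 0 < Z₂ r)
    (hZ0 : ‖ContinuousLinearMap.id ℝ X - A.comp Adag‖ ≤ Z₀)
    (hZ1 : ‖A.comp (DF abar - Adag)‖ ≤ Z₁)
    (hZ2 : ∀ r : ℝ, 0 < r → ∀ c ∈ Metric.closedBall abar r,
      ‖A.comp (DF c - DF abar)‖ ≤ Z₂ r * r)
    (r₀ : ℝ) (hr₀ : 0 < r₀)
    (hp : Z₂ r₀ * r₀ ^ 2 - (1 - Z₁ - Z₀) * r₀ + Y₀ < 0) :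
    Z₀ + Z₁ < 1 ∧
    Z₀ + Z₁ + Z₂ r₀ * r₀ < 1 ∧
    ∀ x ∈ Metric.closedBall abar r₀, ∀ y ∈ Metric.closedBall abar r₀,
      ‖(x - A (F x)) - (y - A (F y))‖ ≤ (Z₀ + Z₁ + Z₂ r₀ * r₀) * ‖x - y‖ := by
  have hκ : Z₀ + Z₁ + Z₂ r₀ * r₀ < 1 := add_add_mul_lt_one_of_radiiPolynomial_neg hr₀ hY₀ hp
  have hZ₂r₀ : 0 < Z₂ r₀ * r₀ := mul_pos (hZ₂pos r₀ hr₀) hr₀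
  refine ⟨by linarith, hκ, fun x hx y hy => ?_⟩
  refine norm_sub_apply_sub_le_of_norm_id_sub_comp_le (convex_closedBall abar r₀)
    (fun c _ => hDF c) (fun c hc => ?_) hx hy
  calc ‖ContinuousLinearMap.id ℝ X - A.comp (DF c)‖
      ≤ ‖ContinuousLinearMap.id ℝ X - A.comp Adag‖ + ‖A.comp (DF abar - Adag)‖
        + ‖A.comp (DF c - DF abar)‖ := norm_id_sub_comp_le A Adag (DF abar) (DF c)
    _ ≤ Z₀ + Z₁ + Z₂ r₀ * r₀ := by gcongr; exact hZ2 r₀ hr₀ c hc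

/-- Under the hypotheses of the Newton–Kantorovich radii polynomial theorem,
negativity of the radii polynomial at `r₀` forces `Z₀ + Z₁ < 1`, and the
Newton-like map `T x = x - A (F x)` is a contraction on the closed ball
`B_{r₀}(ā)` with contraction constant `Z₀ + Z₁ + Z₂(r₀) r₀ < 1`. -/
theorem stmt_7 {X X' : Type*}
    [NormedAddCommGroup X] [NormedSpace ℝ X] [CompleteSpace X]
    [NormedAddCommGroup X'] [NormedSpace ℝ X']
    (F : X → X') (DF : X → X →L[ℝ] X')
    (hDF : ∀ c : X, HasFDerivAt F (DF c) c)
    (Adag : X →L[ℝ] X') (A : X' →L[ℝ] X)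
    (hAinj : Function.Injective A)
    (abar : X) (Y₀ Z₀ Z₁ : ℝ) (Z₂ : ℝ → ℝ)
    (hY₀ : 0 ≤ Y₀) (hZ₀ : 0 ≤ Z₀) (hZ₁ : 0 ≤ Z₁)
    (hZ₂pos : ∀ r : ℝ, 0 < r → 0 < Z₂ r)
    (hY : ‖A (F abar)‖ ≤ Y₀)
    (hZ0 : ‖ContinuousLinearMap.id ℝ X - A.comp Adag‖ ≤ Z₀)
    (hZ1 : ‖A.comp (DF abar - Adag)‖ ≤ Z₁)
    (hZ2 : ∀ r : ℝ, 0 < r → ∀ c ∈ Metric.closedBall abar r,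
      ‖A.comp (DF c - DF abar)‖ ≤ Z₂ r * r)
    (r₀ : ℝ) (hr₀ : 0 < r₀)
    (hp : Z₂ r₀ * r₀ ^ 2 - (1 - Z₁ - Z₀) * r₀ + Y₀ < 0) :
    Z₀ + Z₁ < 1 ∧
    Z₀ + Z₁ + Z₂ r₀ * r₀ < 1 ∧
    ∀ x ∈ Metric.closedBall abar r₀, ∀ y ∈ Metric.closedBall abar r₀,
      ‖(x - A (F x)) - (y - A (F y))‖ ≤ (Z₀ + Z₁ + Z₂ r₀ * r₀) * ‖x - y‖ :=
  stmt_7_general F DF hDF Adag A abar Y₀ Z₀ Z₁ Z₂ hY₀ hZ₂pos hZ0 hZ1 hZ2 r₀ hr₀ hp
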